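/- Let (b₁, r₁) and (b₂, r₂) be pairs of positive integers with 0 < bᵢ < rᵢ. Then for every integer n ≥ 2, Δ^n(b₁,r₁) + Δ^n(b₂,r₂) ≥ Δ^n(b₁+b₂, r₁+r₂). -/

import Mathlib

def Delta (n b r : ℕ) : ℤ :=
  let d : ℤ := (b * n / r : ℕ)
  d * b * n - (r * (d ^ 2 + d)) / 2

/-!
Twice `Δⁿ(b, r)` is the value at `d = ⌊bn/r⌋` of the concave quadratic `2dbn − r(d² + d)`, and
this floor is where the quadratic attains its maximum over the integers. The quadratic is additive
in the pair `(b, r)`, so evaluating both summands at the floor of the packed pair bounds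
`2Δⁿ(b₁ + b₂, r₁ + r₂)` by `2Δⁿ(b₁, r₁) + 2Δⁿ(b₂, r₂)`.
-/

def twiceDeltaAt (x r d : ℤ) : ℤ :=
  2 * d * x - r * (d ^ 2 + d)

lemma twiceDeltaAt_add (x₁ x₂ r₁ r₂ d : ℤ) :
    twiceDeltaAt (x₁ + x₂) (r₁ + r₂) d = twiceDeltaAt x₁ r₁ d + twiceDeltaAt x₂ r₂ d := by
  unfold twiceDeltaAt; ring

lemma twiceDeltaAt_le_of_floor {x r m : ℤ} (hm : r * m ≤ x) (hm' : x < r * (m + 1)) (d : ℤ) :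
    twiceDeltaAt x r d ≤ twiceDeltaAt x r m := by
  have hdiff : twiceDeltaAt x r m - twiceDeltaAt x r d = (m - d) * (2 * x - r * (m + d + 1)) := by
    unfold twiceDeltaAt; ring
  have hr : 0 < r := by nlinarith
  rcases lt_trichotomy d m with hd | rfl | hd
  · have : r * (d + 1) ≤ r * m := mul_le_mul_of_nonneg_left (by omega) hr.le
    nlinarith [mul_nonneg (sub_nonneg.2 hd.le) (by linarith : 0 ≤ 2 * x - r * (m + d + 1))]
  · exact le_rfl
  · have : r * (m + 1) ≤ r * d := mul_le_mul_of_nonneg_left (by omega) hr.le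
    nlinarith [mul_nonneg (sub_nonneg.2 hd.le) (by linarith : 0 ≤ r * (m + d + 1) - 2 * x)]

lemma twiceDeltaAt_le_ediv {x r : ℤ} (hr : 0 < r) (d : ℤ) :
    twiceDeltaAt x r d ≤ twiceDeltaAt x r (x / r) :=
  twiceDeltaAt_le_of_floor (Int.mul_ediv_self_le hr.ne') (by
    have := Int.lt_mul_ediv_self_add (x := x) hr; linarith) d

lemma two_mul_Delta (n b r : ℕ) :
    2 * Delta n b r = twiceDeltaAt (b * n) r ((b * n : ℤ) / r) := by
  have hcast : ((b * n / r : ℕ) : ℤ) = (b * n : ℤ) / r := by push_cast; rfl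
  have heven : (2 : ℤ) ∣ r * ((((b * n / r : ℕ) : ℤ)) ^ 2 + ((b * n / r : ℕ) : ℤ)) :=
    Dvd.dvd.mul_left (by simpa [sq, mul_add] using (Int.even_mul_succ_self _).two_dvd) _
  unfold Delta twiceDeltaAt
  rw [mul_sub, Int.mul_ediv_cancel' heven, hcast]
  ring

theorem stmt_2_general (b₁ r₁ b₂ r₂ : ℕ) (hr₁ : b₁ < r₁)
    (hr₂ : b₂ < r₂) (n : ℕ) :
    Delta n (b₁ + b₂) (r₁ + r₂) ≤ Delta n b₁ r₁ + Delta n b₂ r₂ := by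
  have hsplit := two_mul_Delta n (b₁ + b₂) (r₁ + r₂)
  push_cast at hsplit
  rw [add_mul, twiceDeltaAt_add] at hsplit
  set m : ℤ := (b₁ * n + b₂ * n) / (r₁ + r₂)
  have h₁ := twiceDeltaAt_le_ediv (x := b₁ * n) (r := r₁) (by omega) m
  have h₂ := twiceDeltaAt_le_ediv (x := b₂ * n) (r := r₂) (by omega) m
  rw [← two_mul_Delta] at h₁ h₂
  omega

theorem stmt_2 (b₁ r₁ b₂ r₂ : ℕ) (hb₁ : 0 < b₁) (hr₁ : b₁ < r₁)
    (hb₂ : 0 < b₂) (hr₂ : b₂ < r₂) (n : ℕ) (hn : 2 ≤ n) :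
    Delta n (b₁ + b₂) (r₁ + r₂) ≤ Delta n b₁ r₁ + Delta n b₂ r₂ :=
  stmt_2_general b₁ r₁ b₂ r₂ hr₁ hr₂ n
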